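/- Let d ≥ 2 and let Ω_1, …, Ω_d be nonempty sets, Ω = Ω_1 × ⋯ × Ω_d, and u : Ω → ℝ a tensor function. Suppose there are natural numbers r_0 = r_d = 1 and r_1,…,r_{d-1} such that for every k with 1 ≤ k ≤ d−1 and every sampled tensor B of u (obtained by sampling maps x_i : Fin m_i → Ω_i with arbitrary m_i ≥ 1), the k-th unfolding of B has matrix rank at most r_k. Then there exist TT-core functions u_i : Ω_i → Matrix (Fin r_{i-1}) (Fin r_i) ℝ for i = 1,…,d such that for every (x_1,…,x_d) ∈ Ω, u(x_1,…,x_d) = Σ_{α_0=1}^{r_0} Σ_{α_1=1}^{r_1} ⋯ Σ_{α_d=1}^{r_d} u_1(x_1)(α_0,α_1) u_2(x_2)(α_1,α_2) ⋯ u_d(x_d)(α_{d-1},α_d); equivalently, u(x_1,…,x_d) is the unique entry of the matrix product u_1(x_1) u_2(x_2) ⋯ u_d(x_d). -/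

import Mathlib

/-- The `k`-th unfolding of a `d`-th order tensor `A`: the matrix whose rows are
indexed by the tuples of the first `k` indices, whose columns are indexed by the
tuples of the last `d − k` indices, and whose entries are the entries of `A`. -/
def ttUnfold {d : ℕ} {n : Fin d → ℕ} (A : (∀ i : Fin d, Fin (n i)) → ℝ) (k : ℕ) :
    Matrix ((i : {i : Fin d // i.val < k}) → Fin (n i.1))
      ((i : {i : Fin d // ¬ i.val < k}) → Fin (n i.1)) ℝ :=
  fun row col => A fun i => if h : i.val < k then row ⟨i, h⟩ else col ⟨i, h⟩

/-! If every finite sample of `F : X → Y → K` has rank at most `r`, the rows `F x` span a space of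
dimension at most `r`, because linearly independent functions stay independent on finitely many
points; hence every row is a combination of `r` sampled rows `F (c γ)`. Applied to the unfolding of
`u` after its first variable this gives `u (x₀, y) = ∑ γ, f x₀ γ * u (c γ, y)`: `f` is the first
core, and the functions `γ ↦ u (c γ, ·)` of the remaining variables have unfoldings that are
subsamples of those of `u`. Carrying the row index `γ` along, induction on `d` yields the other
cores. -/

theorem LinearIndependent.exists_sample_linearIndependent {ι Y K : Type*} [Fintype ι] [Field K]
    {v : ι → Y → K} (hv : LinearIndependent K v) :
    ∃ (n : ℕ) (y : Fin n → Y), LinearIndependent K fun i q => v i (y q) := by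
  -- Finitely many of the functionals `Φ y : c ↦ ∑ i, c i * v i y` span all of them.
  let Φ : Y → Module.Dual K (ι → K) := fun y => LinearMap.proj y ∘ₗ Fintype.linearCombination K v
  obtain ⟨g, hg, hspan, -⟩ := Submodule.exists_fun_fin_finrank_span_eq K (Set.range Φ)
  choose y hy using hg
  refine ⟨_, y, Fintype.linearIndependent_iff.mpr fun c hc => ?_⟩
  have hker : Submodule.span K (Set.range Φ) ≤ LinearMap.ker (Module.Dual.eval K _ c) := by
    rw [← hspan, Submodule.span_le, Set.range_subset_iff]
    intro q
    simpa [← hy q, Φ, Fintype.linearCombination_apply] using congrFun hc q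
  refine Fintype.linearIndependent_iff.mp hv c (funext fun y => ?_)
  simpa [Φ, Fintype.linearCombination_apply] using hker (Submodule.subset_span ⟨y, rfl⟩)

def SampleRankLE {X Y K : Type*} [CommRing K] (F : X → Y → K) (r : ℕ) : Prop :=
  ∀ (m n : ℕ) (x : Fin m → X) (y : Fin n → Y), (Matrix.of fun p q => F (x p) (y q)).rank ≤ r

theorem SampleRankLE.of_eq_comp {X Y X' Y' K : Type*} [CommRing K] {G : X → Y → K} {r : ℕ}
    (hG : SampleRankLE G r) {F : X' → Y' → K} (f : X' → X) (g : Y' → Y)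
    (hF : ∀ x y, F x y = G (f x) (g y)) : SampleRankLE F r := by
  intro m n x y
  simpa only [hF, Function.comp_apply] using hG m n (f ∘ x) (g ∘ y)

theorem SampleRankLE.exists_eq_sum_smul {X Y K : Type*} [Field K] [Nonempty X]
    {F : X → Y → K} {r : ℕ} (hF : SampleRankLE F r) :
    ∃ (c : Fin r → X) (f : X → Fin r → K), ∀ x, F x = ∑ j, f x j • F (c j) := by
  obtain ⟨κ, a, -, hspan, hli⟩ := exists_linearIndependent' K F
  -- `r + 1` independent rows would have a sample of rank `r + 1`.
  obtain ⟨e⟩ : Nonempty (κ ↪ Fin r) := by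
    rw [← Cardinal.lift_mk_le', Cardinal.mk_fin, Cardinal.lift_natCast]
    by_contra! hlt
    obtain ⟨e⟩ : Nonempty (Fin (r + 1) ↪ κ) := by
      rw [← Cardinal.lift_mk_le', Cardinal.mk_fin, Cardinal.lift_natCast]
      exact_mod_cast Cardinal.add_one_le_of_lt hlt
    obtain ⟨n, y, hy⟩ := (hli.comp e e.injective).exists_sample_linearIndependent
    have hle := hF _ n (a ∘ e) y
    rw [LinearIndependent.rank_matrix (M := Matrix.of fun p q => F ((a ∘ e) p) (y q)) hy,
      Fintype.card_fin] at hle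
    omega
  let c : Fin r → X := Function.extend e a fun _ => Classical.arbitrary X
  have hmem : ∀ x, F x ∈ Submodule.span K (Set.range (F ∘ c)) := by
    intro x
    have hx : F x ∈ Submodule.span K (Set.range (F ∘ a)) := hspan ▸ Submodule.subset_span ⟨x, rfl⟩
    refine Submodule.span_mono ?_ hx
    rintro _ ⟨k, rfl⟩
    exact ⟨e k, by simp [c, e.injective.extend_apply]⟩
  choose f hf using fun x => (Submodule.mem_span_range_iff_exists_fun K).mp (hmem x)
  exact ⟨c, f, fun x => (hf x).symm⟩

def splice {n : ℕ} {Ω : Fin n → Type*} (k : ℕ) (a b : ∀ i, Ω i) : ∀ i, Ω i :=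
  fun i => if i.val < k then a i else b i

@[simp]
theorem splice_zero {n : ℕ} {Ω : Fin n → Type*} (a b : ∀ i, Ω i) : splice 0 a b = b :=
  rfl

@[simp]
theorem splice_succ_cons {n : ℕ} {Ω : Fin (n + 1) → Type*} (k : ℕ) (ω ω' : Ω 0)
    (a b : ∀ i : Fin n, Ω i.succ) :
    splice (k + 1) (Fin.cons ω a : ∀ i, Ω i) (Fin.cons ω' b) = Fin.cons ω (splice k a b) := by
  ext i
  induction i using Fin.cases <;> simp [splice]

theorem sampleRankLE_splice_of_rank_ttUnfold_le {d : ℕ} {Ω : Fin d → Type*}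
    {u : (∀ i, Ω i) → ℝ} {k R : ℕ}
    (h : ∀ m : Fin d → ℕ, (∀ i, 1 ≤ m i) → ∀ x : ∀ i, Fin (m i) → Ω i,
      (ttUnfold (fun j : ∀ i, Fin (m i) => u fun i => x i (j i)) k).rank ≤ R) :
    SampleRankLE (fun a b => u (splice k a b)) R := by
  intro m m' a b
  obtain hm | hm := Nat.eq_zero_or_pos (m + m')
  · obtain rfl : m = 0 := by omega
    exact (Matrix.rank_le_card_height _).trans (by simp)
  let x : ∀ i, Fin (m + m') → Ω i := fun i => Fin.append (fun p => a p i) (fun q => b q i)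
  have hsub : (Matrix.of fun p q => u (splice k (a p) (b q))) =
      (ttUnfold (fun j : ∀ i, Fin (m + m') => u fun i => x i (j i)) k).submatrix
        (fun p _ => Fin.castAdd m' p) (fun q _ => Fin.natAdd m q) := by
    ext p q
    simp only [Matrix.of_apply, Matrix.submatrix_apply, ttUnfold, x]
    congr 1
    ext i
    split_ifs <;> simp [splice, *]
  rw [hsub]
  exact (Matrix.rank_submatrix_le _ _ _).trans (h (fun _ => m + m') (fun _ => hm) x)

theorem Fin.sum_univ_pi_succ {M : Type*} [AddCommMonoid M] {n : ℕ} {α : Fin (n + 1) → Type*}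
    [∀ i, Fintype (α i)] (f : (∀ i, α i) → M) :
    ∑ a, f a = ∑ a₀, ∑ a : ∀ i : Fin n, α i.succ, f (Fin.cons a₀ a) := by
  rw [← (Fin.consEquiv α).sum_comp, Fintype.sum_prod_type]
  rfl

/-- Row `β` of the product `M 0 * ⋯ * M n`, summed over the column index; for `r (last _) = 1`
it is the `β`-th entry of that column vector. -/
def ttContract {R : Type*} [CommSemiring R] {n : ℕ} {r : Fin (n + 2) → ℕ}
    (M : ∀ i : Fin (n + 1), Matrix (Fin (r i.castSucc)) (Fin (r i.succ)) R) (β : Fin (r 0)) : R :=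
  ∑ α : ∀ j : Fin (n + 1), Fin (r j.succ),
    ∏ i, M i ((Fin.cons β α : ∀ j, Fin (r j)) i.castSucc) ((Fin.cons β α : ∀ j, Fin (r j)) i.succ)

theorem ttContract_zero {R : Type*} [CommSemiring R] {r : Fin 2 → ℕ}
    (M : ∀ i : Fin 1, Matrix (Fin (r i.castSucc)) (Fin (r i.succ)) R) (β : Fin (r 0)) :
    ttContract M β = ∑ γ, M 0 β γ := by
  simp [ttContract, Fin.sum_univ_pi_succ]

theorem ttContract_succ {R : Type*} [CommSemiring R] {n : ℕ} {r : Fin (n + 3) → ℕ}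
    (M : ∀ i : Fin (n + 2), Matrix (Fin (r i.castSucc)) (Fin (r i.succ)) R) (β : Fin (r 0)) :
    ttContract M β = ∑ γ, M 0 β γ * ttContract (r := fun j => r j.succ) (fun i => M i.succ) γ := by
  simp only [ttContract, Fin.sum_univ_pi_succ (α := fun j : Fin (n + 2) => Fin (r j.succ)),
    Fin.prod_univ_succ, Finset.mul_sum]
  rfl

theorem sum_prod_eq_sum_ttContract {R : Type*} [CommSemiring R] {n : ℕ} {r : Fin (n + 2) → ℕ}
    (M : ∀ i : Fin (n + 1), Matrix (Fin (r i.castSucc)) (Fin (r i.succ)) R) :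
    ∑ α : ∀ j, Fin (r j), ∏ i, M i (α i.castSucc) (α i.succ) = ∑ β, ttContract M β :=
  Fin.sum_univ_pi_succ _

theorem exists_ttCores_of_sampleRankLE {K : Type*} [Field K] (n : ℕ) {Ω : Fin (n + 1) → Type*}
    [∀ i, Nonempty (Ω i)] {r : Fin (n + 2) → ℕ} (v : Fin (r 0) → (∀ i, Ω i) → K)
    (hlast : r (Fin.last _) = 1)
    (hrank : ∀ k : Fin n, SampleRankLE (fun (ξ : Fin (r 0) × ∀ i, Ω i) b =>
      v ξ.1 (splice (k.val + 1) ξ.2 b)) (r k.succ.castSucc)) :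
    ∃ cores : ∀ i, Ω i → Matrix (Fin (r i.castSucc)) (Fin (r i.succ)) K,
      ∀ β x, v β x = ttContract (fun i => cores i (x i)) β := by
  induction n with
  | zero =>
    refine ⟨Fin.cons (fun ω => Matrix.of fun β _ => v β (Fin.cons ω isEmptyElim)) isEmptyElim,
      fun β x => ?_⟩
    have hx : (Fin.cons (x 0) isEmptyElim : ∀ i, Ω i) = x := by
      funext i; fin_cases i; rfl
    simp [ttContract_zero, hx, show r 1 = 1 from hlast]
  | succ n ih =>
    cases isEmpty_or_nonempty (Fin (r 0))
    · exact ⟨fun _ _ => 0, fun β => isEmptyElim β⟩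
    let F : Fin (r 0) × Ω 0 → (∀ j : Fin (n + 1), Ω j.succ) → K := fun ξ y => v ξ.1 (Fin.cons ξ.2 y)
    have hF : SampleRankLE F (r (Fin.succ 0)) :=
      (hrank 0).of_eq_comp (fun ξ => (ξ.1, Fin.cons ξ.2 (Classical.arbitrary _)))
        (Fin.cons (Classical.arbitrary _)) fun ξ y => by simp [F]
    obtain ⟨c, f, hf⟩ := hF.exists_eq_sum_smul
    obtain ⟨cores, hcores⟩ := ih (Ω := fun j => Ω j.succ) (r := fun j => r j.succ)
      (fun γ => F (c γ)) hlast fun k => (hrank k.succ).of_eq_comp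
        (fun ξ => ((c ξ.1).1, Fin.cons (c ξ.1).2 ξ.2)) (Fin.cons (Classical.arbitrary _))
        fun ξ b => by simp [F]
    refine ⟨Fin.cons (fun ω => Matrix.of fun β γ => f (β, ω) γ) cores, fun β x => ?_⟩
    calc v β x = F (β, x 0) (Fin.tail x) := by simp [F, Fin.cons_self_tail]
      _ = ∑ γ, f (β, x 0) γ * F (c γ) (Fin.tail x) := by
        rw [hf]; simp [Finset.sum_apply]
      _ = ∑ γ, f (β, x 0) γ * ttContract (r := fun j => r j.succ)
            (fun i => cores i (x i.succ)) γ := by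
        simp only [hcores]; rfl
      _ = _ := by rw [ttContract_succ]; rfl

/-- **Functional tensor train decomposition.** Let `u` be a tensor function on a
product of nonempty domains `Ω 1 × ⋯ × Ω d`. If there are ranks
`(r 0, …, r d)` with `r 0 = r d = 1` such that for every `1 ≤ k ≤ d − 1` the
`k`-th unfolding of every sampled tensor of `u` has rank at most `r k`, then `u`
admits a functional tensor train decomposition with TT-core functions
`u_i : Ω i → Matrix (Fin (r (i-1))) (Fin (r i)) ℝ`. -/
theorem functional_tensor_train_decomposition
    (d : ℕ) (hd : 2 ≤ d) (Ω : Fin d → Type*) (hΩ : ∀ i, Nonempty (Ω i))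
    (u : (∀ i : Fin d, Ω i) → ℝ)
    (r : Fin (d + 1) → ℕ) (hr0 : r 0 = 1) (hrd : r (Fin.last d) = 1)
    (hrank : ∀ k : Fin (d + 1), 1 ≤ k.val → k.val ≤ d - 1 →
      ∀ (m : Fin d → ℕ), (∀ i, 1 ≤ m i) → ∀ x : ∀ i : Fin d, Fin (m i) → Ω i,
        (ttUnfold (fun j : ∀ i : Fin d, Fin (m i) => u fun i => x i (j i)) k.val).rank ≤ r k) :
    ∃ cores : ∀ i : Fin d, Ω i → Matrix (Fin (r i.castSucc)) (Fin (r i.succ)) ℝ,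
      ∀ x : ∀ i : Fin d, Ω i,
        u x = ∑ α : ∀ j : Fin (d + 1), Fin (r j),
          ∏ i : Fin d, cores i (x i) (α i.castSucc) (α i.succ) := by
  obtain ⟨n, rfl⟩ : ∃ n, d = n + 1 := ⟨d - 1, by omega⟩
  obtain ⟨cores, hcores⟩ := exists_ttCores_of_sampleRankLE n (fun _ : Fin (r 0) => u) hrd
    fun k => (sampleRankLE_splice_of_rank_ttUnfold_le
      (hrank k.succ.castSucc (by simp) (by simp))).of_eq_comp Prod.snd id fun _ _ => rfl
  refine ⟨cores, fun x => ?_⟩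
  simp [sum_prod_eq_sum_ttContract, ← hcores, hr0]
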